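/- Let p be a prime, let λ = (λ_1,…,λ_r) be a partition of n and μ = (μ_1,…,μ_s) a partition of m, and let λ⋆μ denote the partition of n + m whose multiset of parts is the union of the multisets of parts of λ and of μ (i.e. the parts λ_1,…,λ_r,μ_1,…,μ_s rearranged into weakly decreasing order). Then ν_p(λ⋆μ) ≥ ν_p(λ) + ν_p(μ). -/

import Mathlib

/-- `lam` is a partition of `n`: weakly decreasing, eventually zero, with parts summing to `n`.
Parts are indexed from `0`, so `lam 0` is the largest part. -/
def IsPartitionOf (n : ℕ) (lam : ℕ → ℕ) : Prop :=
  Antitone lam ∧ ∃ N : ℕ, (∀ i, N ≤ i → lam i = 0) ∧ ∑ i ∈ Finset.range N, lam i = n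

/-- A `lam`-tableau with entries `Fin n`: a bijection between entries and the cells
`(row, col)` of the Young diagram of `lam` (rows and columns indexed from `0`). -/
structure YTableau (n : ℕ) (lam : ℕ → ℕ) where
  pos : Fin n → ℕ × ℕ
  inj : Function.Injective pos
  mem : ∀ k, (pos k).2 < lam (pos k).1
  surj : ∀ c : ℕ × ℕ, c.2 < lam c.1 → ∃ k, pos k = c

/-- Two tableaux are row equivalent when every entry lies in the same row in both. -/
def RowEquiv {n : ℕ} {lam : ℕ → ℕ} (s t : YTableau n lam) : Prop :=
  ∀ k, (s.pos k).1 = (t.pos k).1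

/-- The column stabiliser of a tableau: permutations of the entries preserving each column. -/
def colStab {n : ℕ} {lam : ℕ → ℕ} (t : YTableau n lam) : Finset (Equiv.Perm (Fin n)) :=
  Finset.univ.filter fun σ => ∀ k, (t.pos (σ k)).2 = (t.pos k).2

/-- The polytabloid `e_t`, an element of the free ℤ-module on tabloids.  A tabloid is recorded
as the function sending each entry to its row. -/
noncomputable def polytabloid {n : ℕ} {lam : ℕ → ℕ} (t : YTableau n lam) :
    (Fin n → ℕ) →₀ ℤ :=
  ∑ σ ∈ colStab t,
    ((Equiv.Perm.sign σ : ℤˣ) : ℤ) • Finsupp.single (fun k => (t.pos (σ⁻¹ k)).1) 1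

/-- The bilinear form on the free ℤ-module on tabloids making the tabloids orthonormal. -/
def tabloidInner {n : ℕ} (f g : (Fin n → ℕ) →₀ ℤ) : ℤ :=
  f.sum fun x a => a * g x

/-- The `p`-Schaper number of `lam`: the largest `k` such that `p^k` divides
`⟨e_s, e_t⟩` for all pairs `(s, t)` of row-equivalent `lam`-tableaux. -/
noncomputable def schaperNumber (p n : ℕ) (lam : ℕ → ℕ) : ℕ :=
  sSup {k : ℕ | ∀ s t : YTableau n lam, RowEquiv s t →
    (p : ℤ) ^ k ∣ tabloidInner (polytabloid s) (polytabloid t)}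

theorem Equiv.Perm.apply_inv_self {α : Type*} (σ : Equiv.Perm α) (x : α) : σ (σ⁻¹ x) = x :=
  (Equiv.eq_symm_apply σ).mp rfl

theorem Equiv.Perm.inv_apply_self {α : Type*} (σ : Equiv.Perm α) (x : α) : σ⁻¹ (σ x) = x :=
  Equiv.Perm.inv_eq_iff_eq.mpr rfl

open Finset Equiv Equiv.Perm

noncomputable section SchaperAux

variable {q : ℕ} {κ : ℕ → ℕ}

/-- integer sign of a permutation -/
def psgn {q : ℕ} (σ : Equiv.Perm (Fin q)) : ℤ := ((Equiv.Perm.sign σ : ℤˣ) : ℤ)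

lemma psgn_mul {q : ℕ} (σ τ : Equiv.Perm (Fin q)) : psgn (σ * τ) = psgn σ * psgn τ := by
  simp [psgn]

lemma psgn_mul_self {q : ℕ} (σ : Equiv.Perm (Fin q)) : psgn σ * psgn σ = 1 := by
  simp [psgn, ← Units.val_mul]

lemma psgn_isUnit {q : ℕ} (σ : Equiv.Perm (Fin q)) : IsUnit (psgn σ) :=
  ⟨Equiv.Perm.sign σ, rfl⟩

def rowfun {q : ℕ} {κ : ℕ → ℕ} (t : YTableau q κ) (σ : Equiv.Perm (Fin q)) : Fin q → ℕ :=
  fun k => (t.pos (σ⁻¹ k)).1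

def innerSum {q : ℕ} {κ : ℕ → ℕ} (s t : YTableau q κ) : ℤ :=
  ∑ σ ∈ colStab s, ∑ τ ∈ colStab t,
    psgn σ * psgn τ * (if rowfun s σ = rowfun t τ then 1 else 0)

lemma mem_colStab {t : YTableau q κ} {σ : Equiv.Perm (Fin q)} :
    σ ∈ colStab t ↔ ∀ k, (t.pos (σ k)).2 = (t.pos k).2 := by
  simp [colStab]

lemma one_mem_colStab (t : YTableau q κ) : 1 ∈ colStab t := by
  simp [mem_colStab]

lemma mul_mem_colStab {t : YTableau q κ} {σ τ : Equiv.Perm (Fin q)}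
    (hσ : σ ∈ colStab t) (hτ : τ ∈ colStab t) : σ * τ ∈ colStab t := by
  rw [mem_colStab] at *
  intro k
  simpa using (hσ (τ k)).trans (hτ k)

lemma inv_mem_colStab {t : YTableau q κ} {σ : Equiv.Perm (Fin q)}
    (hσ : σ ∈ colStab t) : σ⁻¹ ∈ colStab t := by
  rw [mem_colStab] at *
  intro k
  simpa using (hσ (σ⁻¹ k)).symm

/-- expansion of the bilinear form of two polytabloids as a double sum -/
lemma innerSum_eq (s t : YTableau q κ) :
    tabloidInner (polytabloid s) (polytabloid t) = innerSum s t := by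
  classical
  unfold tabloidInner polytabloid innerSum
  rw [← Finsupp.sum_finset_sum_index (by intro x; ring) (by intro x a b; ring)]
  refine Finset.sum_congr rfl ?_
  intro σ hσ
  rw [show ((Equiv.Perm.sign σ : ℤˣ) : ℤ) • Finsupp.single (fun k => (s.pos (σ⁻¹ k)).1) (1:ℤ)
      = Finsupp.single (fun k => (s.pos (σ⁻¹ k)).1) (psgn σ) by
    rw [Finsupp.smul_single']; simp [psgn]]
  rw [Finsupp.sum_single_index (by ring)]
  rw [Finset.sum_apply']
  rw [Finset.mul_sum]
  refine Finset.sum_congr rfl ?_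
  intro τ hτ
  rw [Finsupp.smul_apply, Finsupp.single_apply]
  unfold rowfun psgn
  by_cases h : (fun k => (s.pos (σ⁻¹ k)).1) = (fun k => (t.pos (τ⁻¹ k)).1)
  · rw [if_pos h, if_pos h.symm]
    simp
  · rw [if_neg h, if_neg (fun hh => h hh.symm)]
    simp

end SchaperAux

noncomputable section SchaperAux2
open Finset Equiv Equiv.Perm

variable {q : ℕ} {κ : ℕ → ℕ}

/-- a permutation of the entries acting on a tableau -/
def permAct (π : Equiv.Perm (Fin q)) (t : YTableau q κ) : YTableau q κ where
  pos := fun k => t.pos (π⁻¹ k)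
  inj := fun a b h => by
    have := t.inj h
    simpa using congrArg π this
  mem := fun k => t.mem _
  surj := fun c hc => by
    obtain ⟨k, hk⟩ := t.surj c hc
    exact ⟨π k, by simpa using hk⟩

lemma mem_colStab_permAct {t : YTableau q κ} {π σ : Equiv.Perm (Fin q)} :
    σ ∈ colStab (permAct π t) ↔ π⁻¹ * σ * π ∈ colStab t := by
  simp only [mem_colStab, permAct]
  constructor
  · intro h k
    simpa using h (π k)
  · intro h k
    simpa using h (π⁻¹ k)

lemma innerSum_permAct (s t : YTableau q κ) (σ₀ τ₀ : Equiv.Perm (Fin q))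
    (hσ₀ : σ₀ ∈ colStab s) (hτ₀ : τ₀ ∈ colStab t) :
    innerSum s t = psgn σ₀ * psgn τ₀ * innerSum (permAct σ₀ s) (permAct τ₀ t) := by
  classical
  unfold innerSum
  rw [← Finset.sum_product', ← Finset.sum_product']
  rw [Finset.mul_sum]
  refine Finset.sum_nbij' (fun x => (x.1 * σ₀⁻¹, x.2 * τ₀⁻¹)) (fun y => (y.1 * σ₀, y.2 * τ₀))
    ?_ ?_ ?_ ?_ ?_
  · rintro ⟨σ, τ⟩ hx
    rw [Finset.mem_product] at hx ⊢
    constructor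
    · rw [mem_colStab_permAct]
      have : σ₀⁻¹ * (σ * σ₀⁻¹) * σ₀ = σ₀⁻¹ * σ := by group
      rw [this]
      exact mul_mem_colStab (inv_mem_colStab hσ₀) hx.1
    · rw [mem_colStab_permAct]
      have : τ₀⁻¹ * (τ * τ₀⁻¹) * τ₀ = τ₀⁻¹ * τ := by group
      rw [this]
      exact mul_mem_colStab (inv_mem_colStab hτ₀) hx.2
  · rintro ⟨σ, τ⟩ hx
    dsimp only
    rw [Finset.mem_product] at hx ⊢
    rw [mem_colStab_permAct] at hx
    rcases hx with ⟨h1, h2⟩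
    rw [mem_colStab_permAct] at h2
    constructor
    · have : σ * σ₀ = σ₀ * (σ₀⁻¹ * σ * σ₀) := by group
      rw [this]
      exact mul_mem_colStab hσ₀ h1
    · have : τ * τ₀ = τ₀ * (τ₀⁻¹ * τ * τ₀) := by group
      rw [this]
      exact mul_mem_colStab hτ₀ h2
  · rintro ⟨σ, τ⟩ _
    simp [mul_assoc]
  · rintro ⟨σ, τ⟩ _
    simp [mul_assoc]
  · rintro ⟨σ, τ⟩ _
    have hr : rowfun (permAct σ₀ s) (σ * σ₀⁻¹) = rowfun s σ := by
      funext k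
      simp only [rowfun, permAct, mul_inv_rev, inv_inv]
      congr 1
      simp [Equiv.Perm.mul_apply]
    have hr2 : rowfun (permAct τ₀ t) (τ * τ₀⁻¹) = rowfun t τ := by
      funext k
      simp only [rowfun, permAct, mul_inv_rev, inv_inv]
      congr 1
      simp [Equiv.Perm.mul_apply]
    rw [hr, hr2, psgn_mul, psgn_mul]
    have h1 : psgn σ₀⁻¹ = psgn σ₀ := by simp [psgn]
    have h2 : psgn τ₀⁻¹ = psgn τ₀ := by simp [psgn]
    rw [h1, h2]
    ring_nf
    rw [sq, psgn_mul_self, sq, psgn_mul_self]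
    ring

lemma dvd_innerSum_of_rowEquiv_dvd (d : ℤ)
    (h : ∀ s t : YTableau q κ, RowEquiv s t → d ∣ innerSum s t) :
    ∀ s t : YTableau q κ, d ∣ innerSum s t := by
  intro s t
  by_cases hw : ∃ σ₀ ∈ colStab s, ∃ τ₀ ∈ colStab t, rowfun s σ₀ = rowfun t τ₀
  · obtain ⟨σ₀, hσ₀, τ₀, hτ₀, hr⟩ := hw
    rw [innerSum_permAct s t σ₀ τ₀ hσ₀ hτ₀]
    exact Dvd.dvd.mul_left (h _ _ (fun k => congrFun hr k)) _
  · push_neg at hw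
    have : innerSum s t = 0 := by
      unfold innerSum
      refine Finset.sum_eq_zero fun σ hσ => Finset.sum_eq_zero fun τ hτ => ?_
      rw [if_neg (hw σ hσ τ hτ), mul_zero]
    simp [this]

lemma innerSum_self (t : YTableau q κ) : innerSum t t = ((colStab t).card : ℤ) := by
  classical
  unfold innerSum
  have key : ∀ σ ∈ colStab t, ∀ τ ∈ colStab t, (rowfun t σ = rowfun t τ ↔ τ = σ) := by
    intro σ hσ τ hτ
    constructor
    · intro hr
      have : ∀ k, σ⁻¹ k = τ⁻¹ k := by
        intro k
        apply t.inj
        have hcol : (t.pos (σ⁻¹ k)).2 = (t.pos (τ⁻¹ k)).2 := by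
          have h1 := (inv_mem_colStab hσ)
          have h2 := (inv_mem_colStab hτ)
          rw [mem_colStab] at h1 h2
          rw [h1 k, h2 k]
        have hrow : (t.pos (σ⁻¹ k)).1 = (t.pos (τ⁻¹ k)).1 := congrFun hr k
        exact Prod.ext hrow hcol
      have : σ⁻¹ = τ⁻¹ := Equiv.ext this
      have := congrArg (·⁻¹) this
      simpa using this.symm
    · intro h; rw [h]
  calc ∑ σ ∈ colStab t, ∑ τ ∈ colStab t,
        psgn σ * psgn τ * (if rowfun t σ = rowfun t τ then 1 else 0)
      = ∑ σ ∈ colStab t, ∑ τ ∈ colStab t,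
        (if τ = σ then psgn σ * psgn τ else 0) := by
        refine Finset.sum_congr rfl fun σ hσ => Finset.sum_congr rfl fun τ hτ => ?_
        rw [if_congr (key σ hσ τ hτ) rfl rfl]
        by_cases h : τ = σ <;> simp [h]
    _ = ∑ σ ∈ colStab t, psgn σ * psgn σ := by
        refine Finset.sum_congr rfl fun σ hσ => ?_
        rw [Finset.sum_ite_eq' (colStab t) σ (fun τ => psgn σ * psgn τ), if_pos hσ]
    _ = ∑ _σ ∈ colStab t, (1:ℤ) := by
        refine Finset.sum_congr rfl fun σ _ => psgn_mul_self σ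
    _ = ((colStab t).card : ℤ) := by simp

lemma part_eq_zero (h : IsPartitionOf q κ) : ∀ i, q ≤ i → κ i = 0 := by
  obtain ⟨hanti, N, hN, hsum⟩ := h
  intro i hi
  by_contra hpos
  have h1 : 1 ≤ κ i := Nat.one_le_iff_ne_zero.mpr hpos
  have hiN : i < N := by
    by_contra hge
    exact hpos (hN i (le_of_not_gt hge))
  have : i + 1 ≤ ∑ j ∈ Finset.range N, κ j := by
    calc i + 1 = ∑ _j ∈ Finset.range (i+1), 1 := by simp
    _ ≤ ∑ j ∈ Finset.range (i+1), κ j := by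
        refine Finset.sum_le_sum fun j hj => ?_
        rw [Finset.mem_range] at hj
        exact le_trans h1 (hanti (Nat.lt_succ_iff.mp hj))
    _ ≤ ∑ j ∈ Finset.range N, κ j := by
        refine Finset.sum_le_sum_of_subset (Finset.range_subset_range.mpr hiN)
  omega

lemma sum_range_part (h : IsPartitionOf q κ) : ∑ i ∈ Finset.range q, κ i = q := by
  obtain ⟨hanti, N, hN, hsum⟩ := h
  have hz := part_eq_zero ⟨hanti, N, hN, hsum⟩
  have e1 : ∑ i ∈ Finset.range (max N q), κ i = ∑ i ∈ Finset.range N, κ i := by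
    refine (Finset.sum_subset (Finset.range_subset_range.mpr (le_max_left _ _)) ?_).symm
    intro i _ hni
    rw [Finset.mem_range] at hni
    exact hN i (le_of_not_gt hni)
  have e2 : ∑ i ∈ Finset.range (max N q), κ i = ∑ i ∈ Finset.range q, κ i := by
    refine (Finset.sum_subset (Finset.range_subset_range.mpr (le_max_right _ _)) ?_).symm
    intro i _ hni
    rw [Finset.mem_range] at hni
    exact hz i (le_of_not_gt hni)
  omega

lemma exists_ytableau (h : IsPartitionOf q κ) : Nonempty (YTableau q κ) := by
  classical
  set cells : Finset ((_ : ℕ) × ℕ) := (Finset.range q).sigma (fun i => Finset.range (κ i)) with hcells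
  have hcard : Fintype.card cells = q := by
    rw [Fintype.card_coe, hcells, Finset.card_sigma]
    simpa using sum_range_part h
  have e : Fin q ≃ cells := (Fintype.equivFinOfCardEq hcard).symm
  refine ⟨⟨fun k => ((e k).1.1, (e k).1.2), ?_, ?_, ?_⟩⟩
  · intro a b hab
    have h1 : (e a).1.1 = (e b).1.1 := congrArg Prod.fst hab
    have h2 : (e a).1.2 = (e b).1.2 := congrArg Prod.snd hab
    have : (e a).1 = (e b).1 := Sigma.ext h1 (by simpa using h2)
    have : (e a) = (e b) := Subtype.ext this
    exact e.injective this
  · intro k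
    have h2 := (Finset.mem_sigma.mp (e k).2).2
    simpa using h2
  · intro c hc
    have hc1 : c.1 < q := by
      by_contra hge
      rw [part_eq_zero h c.1 (le_of_not_gt hge)] at hc
      omega
    have hmem : (⟨c.1, c.2⟩ : (_ : ℕ) × ℕ) ∈ cells := by
      rw [hcells, Finset.mem_sigma]
      exact ⟨Finset.mem_range.mpr hc1, Finset.mem_range.mpr hc⟩
    refine ⟨e.symm ⟨⟨c.1, c.2⟩, hmem⟩, ?_⟩
    rw [e.apply_symm_apply]

lemma schaper_dvd {p : ℕ} (hp : 2 ≤ p) (h : IsPartitionOf q κ) :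
    ∀ s t : YTableau q κ, (p:ℤ)^(schaperNumber p q κ) ∣ innerSum s t := by
  classical
  obtain ⟨t₀⟩ := exists_ytableau h
  have hbdd : BddAbove {k : ℕ | ∀ s t : YTableau q κ, RowEquiv s t →
      (p : ℤ) ^ k ∣ tabloidInner (polytabloid s) (polytabloid t)} := by
    refine ⟨(colStab t₀).card, ?_⟩
    intro k hk
    have hd := hk t₀ t₀ (fun _ => rfl)
    rw [innerSum_eq, innerSum_self] at hd
    have hcpos : 0 < (colStab t₀).card :=
      Finset.card_pos.mpr ⟨1, one_mem_colStab t₀⟩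
    have hle : (p:ℤ)^k ≤ ((colStab t₀).card : ℤ) :=
      Int.le_of_dvd (by exact_mod_cast hcpos) hd
    have hle' : p^k ≤ (colStab t₀).card := by exact_mod_cast hle
    exact le_of_lt (calc k < 2^k := Nat.lt_two_pow_self
      _ ≤ p^k := Nat.pow_le_pow_left hp k
      _ ≤ (colStab t₀).card := hle')
  have hmem := Nat.sSup_mem (s := {k : ℕ | ∀ s t : YTableau q κ, RowEquiv s t →
      (p : ℤ) ^ k ∣ tabloidInner (polytabloid s) (polytabloid t)})
      ⟨0, by intro s t _; simp⟩ hbdd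
  refine dvd_innerSum_of_rowEquiv_dvd _ ?_
  intro s t hst
  have := hmem s t hst
  rwa [innerSum_eq] at this

end SchaperAux2

section SchaperCnt
open Finset

/-- number of parts of `κ` (among the first `q`) that are at least `v` -/
def cnt (κ : ℕ → ℕ) (q v : ℕ) : ℕ := ((Finset.range q).filter (fun i => v ≤ κ i)).card

lemma cnt_le (κ : ℕ → ℕ) (q v : ℕ) : cnt κ q v ≤ q := by
  simpa [cnt] using Finset.card_filter_le (Finset.range q) (fun i => v ≤ κ i)

lemma cnt_anti (κ : ℕ → ℕ) (q : ℕ) {v w : ℕ} (hvw : v ≤ w) : cnt κ q w ≤ cnt κ q v := by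
  refine Finset.card_le_card (Finset.monotone_filter_right _ ?_)
  intro i _ hi
  exact le_trans hvw hi

lemma lt_cnt_of {q : ℕ} {κ : ℕ → ℕ} (h : IsPartitionOf q κ) {v r : ℕ} (hv : 1 ≤ v)
    (hr : v ≤ κ r) : r < cnt κ q v := by
  have hrq : r < q := by
    by_contra hge
    rw [part_eq_zero h r (le_of_not_gt hge)] at hr
    omega
  have hsub : Finset.range (r+1) ⊆ (Finset.range q).filter (fun i => v ≤ κ i) := by
    intro j hj
    rw [Finset.mem_range] at hj
    rw [Finset.mem_filter, Finset.mem_range]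
    exact ⟨by omega, le_trans hr (h.1 (by omega))⟩
  have := Finset.card_le_card hsub
  simpa [cnt] using this

lemma le_of_lt_cnt {q : ℕ} {κ : ℕ → ℕ} (h : IsPartitionOf q κ) {v r : ℕ}
    (hr : r < cnt κ q v) : v ≤ κ r := by
  by_contra hlt
  have hsub : (Finset.range q).filter (fun i => v ≤ κ i) ⊆ Finset.range r := by
    intro j hj
    rw [Finset.mem_filter] at hj
    rw [Finset.mem_range]
    by_contra hge
    have : κ j ≤ κ r := h.1 (le_of_not_gt hge)
    omega
  have := Finset.card_le_card hsub
  simp only [Finset.card_range] at this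
  unfold cnt at hr
  omega

lemma cnt_eq_sum {q W v : ℕ} {κ : ℕ → ℕ} (hW : ∀ i, i < q → κ i ≤ W) (hv : 1 ≤ v) :
    cnt κ q v = ∑ w ∈ Finset.Icc v W, ((Finset.range q).filter (fun i => κ i = w)).card := by
  classical
  unfold cnt
  rw [← Finset.card_biUnion]
  · congr 1
    ext i
    simp only [Finset.mem_biUnion, Finset.mem_filter, Finset.mem_range, Finset.mem_Icc]
    constructor
    · rintro ⟨hiq, hvi⟩
      exact ⟨κ i, ⟨hvi, hW i hiq⟩, hiq, rfl⟩
    · rintro ⟨w, ⟨hvw, _⟩, hiq, hiw⟩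
      exact ⟨hiq, by omega⟩
  · intro w _ w' _ hww'
    refine Finset.disjoint_left.mpr ?_
    intro i hi hi'
    rw [Finset.mem_filter] at hi hi'
    exact hww' (hi.2 ▸ hi'.2 ▸ rfl)

end SchaperCnt

section SchaperMerge
open Finset

lemma part_le {q : ℕ} {κ : ℕ → ℕ} (h : IsPartitionOf q κ) (i : ℕ) : κ i ≤ q := by
  rcases lt_or_ge i q with hi | hi
  · calc κ i ≤ ∑ j ∈ Finset.range q, κ j :=
      Finset.single_le_sum (fun j _ => Nat.zero_le _) (Finset.mem_range.mpr hi)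
    _ = q := sum_range_part h
  · rw [part_eq_zero h i hi]; omega

variable {n m : ℕ} {lam mu nu : ℕ → ℕ}

lemma cnt_nu_add (hlam : IsPartitionOf n lam) (hmu : IsPartitionOf m mu)
    (hnu : IsPartitionOf (n + m) nu)
    (hparts : ∀ v : ℕ, 0 < v →
      ((Finset.range (n + m)).filter fun i => nu i = v).card =
        ((Finset.range n).filter fun i => lam i = v).card +
          ((Finset.range m).filter fun i => mu i = v).card)
    {v : ℕ} (hv : 1 ≤ v) :
    cnt nu (n+m) v = cnt lam n v + cnt mu m v := by
  rw [cnt_eq_sum (W := n+m) (fun i _ => part_le hnu i) hv,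
      cnt_eq_sum (W := n+m) (fun i _ => le_trans (part_le hlam i) (Nat.le_add_right n m)) hv,
      cnt_eq_sum (W := n+m) (fun i _ => le_trans (part_le hmu i) (Nat.le_add_left m n)) hv,
      ← Finset.sum_add_distrib]
  refine Finset.sum_congr rfl fun w hw => ?_
  rw [Finset.mem_Icc] at hw
  exact hparts w (by omega)

lemma nu_fl (hlam : IsPartitionOf n lam) (hmu : IsPartitionOf m mu)
    (hnu : IsPartitionOf (n + m) nu)
    (hparts : ∀ v : ℕ, 0 < v →
      ((Finset.range (n + m)).filter fun i => nu i = v).card =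
        ((Finset.range n).filter fun i => lam i = v).card +
          ((Finset.range m).filter fun i => mu i = v).card)
    {i : ℕ} (hi : 1 ≤ lam i) : nu (i + cnt mu m (lam i + 1)) = lam i := by
  set v := lam i with hvdef
  set r := i + cnt mu m (v + 1) with hrdef
  have h1 : v ≤ nu r := by
    refine le_of_lt_cnt hnu ?_
    rw [cnt_nu_add hlam hmu hnu hparts hi]
    have hia : i < cnt lam n v := lt_cnt_of hlam hi (le_refl _)
    have hb : cnt mu m (v+1) ≤ cnt mu m v := cnt_anti mu m (by omega)
    omega
  have h2 : ¬ (v + 1 ≤ nu r) := by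
    intro hcon
    have := lt_cnt_of hnu (by omega) hcon
    rw [cnt_nu_add hlam hmu hnu hparts (by omega)] at this
    have hle : cnt lam n (v+1) ≤ i := by
      by_contra hlt
      have := le_of_lt_cnt hlam (lt_of_not_ge hlt)
      omega
    omega
  omega

lemma nu_fm (hlam : IsPartitionOf n lam) (hmu : IsPartitionOf m mu)
    (hnu : IsPartitionOf (n + m) nu)
    (hparts : ∀ v : ℕ, 0 < v →
      ((Finset.range (n + m)).filter fun i => nu i = v).card =
        ((Finset.range n).filter fun i => lam i = v).card +
          ((Finset.range m).filter fun i => mu i = v).card)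
    {j : ℕ} (hj : 1 ≤ mu j) : nu (j + cnt lam n (mu j)) = mu j := by
  set v := mu j with hvdef
  set r := j + cnt lam n v with hrdef
  have h1 : v ≤ nu r := by
    refine le_of_lt_cnt hnu ?_
    rw [cnt_nu_add hlam hmu hnu hparts hj]
    have hja : j < cnt mu m v := lt_cnt_of hmu hj (le_refl _)
    omega
  have h2 : ¬ (v + 1 ≤ nu r) := by
    intro hcon
    have := lt_cnt_of hnu (by omega) hcon
    rw [cnt_nu_add hlam hmu hnu hparts (by omega)] at this
    have hle1 : cnt lam n (v+1) ≤ cnt lam n v := cnt_anti lam n (by omega)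
    have hle : cnt mu m (v+1) ≤ j := by
      by_contra hlt
      have := le_of_lt_cnt hmu (lt_of_not_ge hlt)
      omega
    omega
  omega

lemma fl_strictMono (hlam : IsPartitionOf n lam) :
    StrictMono (fun i => i + cnt mu m (lam i + 1)) := by
  intro i i' hii'
  have h1 : lam i' ≤ lam i := hlam.1 (le_of_lt hii')
  have h2 : cnt mu m (lam i + 1) ≤ cnt mu m (lam i' + 1) := cnt_anti mu m (by omega)
  simp only []
  omega

lemma fm_strictMono (hmu : IsPartitionOf m mu) :
    StrictMono (fun j => j + cnt lam n (mu j)) := by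
  intro j j' hjj'
  have h1 : mu j' ≤ mu j := hmu.1 (le_of_lt hjj')
  have h2 : cnt lam n (mu j) ≤ cnt lam n (mu j') := cnt_anti lam n (by omega)
  simp only []
  omega

lemma fl_ne_fm (hlam : IsPartitionOf n lam) (hmu : IsPartitionOf m mu)
    (hnu : IsPartitionOf (n + m) nu)
    (hparts : ∀ v : ℕ, 0 < v →
      ((Finset.range (n + m)).filter fun i => nu i = v).card =
        ((Finset.range n).filter fun i => lam i = v).card +
          ((Finset.range m).filter fun i => mu i = v).card)
    {i j : ℕ} (hi : 1 ≤ lam i) (hj : 1 ≤ mu j) :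
    i + cnt mu m (lam i + 1) ≠ j + cnt lam n (mu j) := by
  intro hcon
  have e1 := nu_fl hlam hmu hnu hparts hi
  have e2 := nu_fm hlam hmu hnu hparts hj
  rw [hcon] at e1
  have hv : lam i = mu j := by omega
  have hia : i < cnt lam n (lam i) := lt_cnt_of hlam hi (le_refl _)
  have hjb : cnt mu m (lam i + 1) ≤ j := by
    by_contra hlt
    have := le_of_lt_cnt hmu (lt_of_not_ge hlt)
    omega
  rw [hv] at hia
  omega

lemma merge_cover (hlam : IsPartitionOf n lam) (hmu : IsPartitionOf m mu)
    (hnu : IsPartitionOf (n + m) nu)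
    (hparts : ∀ v : ℕ, 0 < v →
      ((Finset.range (n + m)).filter fun i => nu i = v).card =
        ((Finset.range n).filter fun i => lam i = v).card +
          ((Finset.range m).filter fun i => mu i = v).card) :
    ((Finset.range n).filter (fun i => 1 ≤ lam i)).image (fun i => i + cnt mu m (lam i + 1)) ∪
    ((Finset.range m).filter (fun j => 1 ≤ mu j)).image (fun j => j + cnt lam n (mu j)) =
    (Finset.range (n+m)).filter (fun r => 1 ≤ nu r) := by
  classical
  set Rl := ((Finset.range n).filter (fun i => 1 ≤ lam i)).image
    (fun i => i + cnt mu m (lam i + 1)) with hRl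
  set Rm := ((Finset.range m).filter (fun j => 1 ≤ mu j)).image
    (fun j => j + cnt lam n (mu j)) with hRm
  have hsub : Rl ∪ Rm ⊆ (Finset.range (n+m)).filter (fun r => 1 ≤ nu r) := by
    intro r hr
    rw [Finset.mem_union] at hr
    rcases hr with hr | hr
    · rw [hRl, Finset.mem_image] at hr
      obtain ⟨i, hi, rfl⟩ := hr
      rw [Finset.mem_filter] at hi
      have := nu_fl hlam hmu hnu hparts hi.2
      rw [Finset.mem_filter, Finset.mem_range]
      constructor
      · by_contra hge
        rw [part_eq_zero hnu _ (le_of_not_gt hge)] at this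
        omega
      · omega
    · rw [hRm, Finset.mem_image] at hr
      obtain ⟨j, hj, rfl⟩ := hr
      rw [Finset.mem_filter] at hj
      have := nu_fm hlam hmu hnu hparts hj.2
      rw [Finset.mem_filter, Finset.mem_range]
      constructor
      · by_contra hge
        rw [part_eq_zero hnu _ (le_of_not_gt hge)] at this
        omega
      · omega
  have hdisj : Disjoint Rl Rm := by
    rw [Finset.disjoint_left]
    intro r hr hr'
    rw [hRl, Finset.mem_image] at hr
    rw [hRm, Finset.mem_image] at hr'
    obtain ⟨i, hi, hri⟩ := hr
    obtain ⟨j, hj, hrj⟩ := hr'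
    rw [Finset.mem_filter] at hi hj
    exact fl_ne_fm hlam hmu hnu hparts hi.2 hj.2 (hri.trans hrj.symm)
  have hcard : ((Finset.range (n+m)).filter (fun r => 1 ≤ nu r)).card ≤ (Rl ∪ Rm).card := by
    rw [Finset.card_union_of_disjoint hdisj, hRl, hRm,
      Finset.card_image_of_injective _ (fl_strictMono (mu := mu) hlam).injective,
      Finset.card_image_of_injective _ (fm_strictMono (lam := lam) hmu).injective]
    have := cnt_nu_add hlam hmu hnu hparts (v := 1) (le_refl _)
    unfold cnt at this
    omega
  exact Finset.eq_of_subset_of_card_le hsub hcard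

end SchaperMerge

section SchaperExt
open Finset Equiv Equiv.Perm

variable {N q : ℕ} {E : Finset (Fin N)}

/-- extend a permutation of `E ⊆ Fin N` (labelled by `Fin q`) to `Fin N` by the identity -/
def extPerm (ee : Fin q ≃ {x : Fin N // x ∈ E}) (π : Equiv.Perm (Fin q)) :
    Equiv.Perm (Fin N) :=
  π.extendDomain (p := fun x => x ∈ E) ee

lemma extPerm_apply_ee (ee : Fin q ≃ {x : Fin N // x ∈ E}) (π : Equiv.Perm (Fin q)) (k : Fin q) :
    extPerm ee π ((ee k : Fin N)) = ee (π k) := by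
  unfold extPerm
  have h := Equiv.Perm.extendDomain_apply_subtype (p := fun x => x ∈ E) π ee (ee k).2
  rw [h]
  congr
  rw [show (⟨((ee k : Fin N)), (ee k).2⟩ : {x : Fin N // x ∈ E}) = ee k from Subtype.ext rfl]
  rw [Equiv.symm_apply_apply]

lemma extPerm_apply_not_mem (ee : Fin q ≃ {x : Fin N // x ∈ E}) (π : Equiv.Perm (Fin q))
    {x : Fin N} (hx : x ∉ E) : extPerm ee π x = x :=
  Equiv.Perm.extendDomain_apply_not_subtype (p := fun x => x ∈ E) π ee hx

lemma extPerm_inv (ee : Fin q ≃ {x : Fin N // x ∈ E}) (π : Equiv.Perm (Fin q)) :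
    (extPerm ee π)⁻¹ = extPerm ee π⁻¹ :=
  Equiv.Perm.extendDomain_inv π ee

lemma psgn_extPerm (ee : Fin q ≃ {x : Fin N // x ∈ E}) (π : Equiv.Perm (Fin q)) :
    psgn (extPerm ee π) = psgn π := by
  unfold psgn extPerm
  rw [Equiv.Perm.sign_extendDomain]

lemma pres_of_fix_outside {a : Equiv.Perm (Fin N)} (ha : ∀ k, k ∉ E → a k = k) :
    ∀ x : Fin N, x ∈ E ↔ a x ∈ E := by
  intro x
  constructor
  · intro hx
    by_contra hax
    have := ha (a x) hax
    have := a.injective this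
    rw [← this] at hx
    exact hax hx
  · intro hax
    by_contra hx
    rw [ha x hx] at hax
    exact hx hax

lemma extPerm_fix_outside (ee : Fin q ≃ {x : Fin N // x ∈ E}) (π : Equiv.Perm (Fin q)) :
    ∀ k, k ∉ E → extPerm ee π k = k := fun _ hk => extPerm_apply_not_mem ee π hk

/-- restrict a permutation of `Fin N` preserving `E` to a permutation of `Fin q` -/
noncomputable def restrPerm (ee : Fin q ≃ {x : Fin N // x ∈ E}) (a : Equiv.Perm (Fin N)) :
    Equiv.Perm (Fin q) :=
  if h : ∀ x : Fin N, x ∈ E ↔ a x ∈ E then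
    (ee.trans ((a.subtypePerm (fun x => (h x).symm)).trans ee.symm)) else 1

lemma restrPerm_apply (ee : Fin q ≃ {x : Fin N // x ∈ E}) {a : Equiv.Perm (Fin N)}
    (h : ∀ x : Fin N, x ∈ E ↔ a x ∈ E) (k : Fin q) :
    ((ee (restrPerm ee a k) : Fin N)) = a ((ee k : Fin N)) := by
  unfold restrPerm
  rw [dif_pos h]
  simp [Equiv.Perm.subtypePerm]

lemma ext_restr (ee : Fin q ≃ {x : Fin N // x ∈ E}) {a : Equiv.Perm (Fin N)}
    (ha : ∀ k, k ∉ E → a k = k) : extPerm ee (restrPerm ee a) = a := by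
  have h := pres_of_fix_outside ha
  apply Equiv.ext
  intro x
  by_cases hx : x ∈ E
  · have e1 : x = ((ee (ee.symm ⟨x, hx⟩) : Fin N)) := by rw [Equiv.apply_symm_apply]
    rw [e1, extPerm_apply_ee, restrPerm_apply ee h]
  · rw [extPerm_apply_not_mem ee _ hx, ha x hx]

lemma restr_ext (ee : Fin q ≃ {x : Fin N // x ∈ E}) (π : Equiv.Perm (Fin q)) :
    restrPerm ee (extPerm ee π) = π := by
  apply Equiv.ext
  intro k
  have h : ∀ x : Fin N, x ∈ E ↔ extPerm ee π x ∈ E :=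
    pres_of_fix_outside (extPerm_fix_outside ee π)
  have := restrPerm_apply ee h k
  rw [extPerm_apply_ee] at this
  have := Subtype.ext this
  exact ee.injective this

lemma psgn_restrPerm (ee : Fin q ≃ {x : Fin N // x ∈ E}) {a : Equiv.Perm (Fin N)}
    (ha : ∀ k, k ∉ E → a k = k) : psgn (restrPerm ee a) = psgn a := by
  conv_rhs => rw [← ext_restr ee ha]
  rw [psgn_extPerm]

end SchaperExt

section SchaperRestr
open Finset Equiv Equiv.Perm

/-- The tableau of shape `kappa` obtained from a `nu`-tableau by restricting to the entries
(relabelled by `u` then `ee`) lying in the rows in `R`, with rows relabelled by `φ`. -/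
def restrTab {N q : ℕ} {nu kappa : ℕ → ℕ} (t : YTableau N nu) (u : Equiv.Perm (Fin N))
    (E : Finset (Fin N)) (R : Finset ℕ) (φ f : ℕ → ℕ)
    (ee : Fin q ≃ {x : Fin N // x ∈ E})
    (hR : ∀ k, k ∈ E ↔ (t.pos k).1 ∈ R)
    (hRnu : ∀ r ∈ R, nu r = kappa (φ r))
    (hRφf : ∀ r ∈ R, f (φ r) = r)
    (hRmem : ∀ i, 0 < kappa i → f i ∈ R ∧ φ (f i) = i)
    (hu : ∀ k, k ∈ E ↔ u k ∈ E) : YTableau q kappa where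
  pos k := (φ (t.pos (u (ee k))).1, (t.pos (u (ee k))).2)
  inj := by
    intro k k' h
    dsimp only at h
    obtain ⟨h1, h2⟩ := Prod.mk.inj h
    have hr : (t.pos (u (ee k))).1 ∈ R := (hR _).mp ((hu _).mp (ee k).2)
    have hr' : (t.pos (u (ee k'))).1 ∈ R := (hR _).mp ((hu _).mp (ee k').2)
    have hrow : (t.pos (u (ee k))).1 = (t.pos (u (ee k'))).1 := by
      rw [← hRφf _ hr, ← hRφf _ hr', h1]
    have h3 := t.inj (Prod.ext hrow h2)
    have h4 := u.injective h3
    exact ee.injective (Subtype.ext h4)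
  mem := by
    intro k
    have hr : (t.pos (u (ee k))).1 ∈ R := (hR _).mp ((hu _).mp (ee k).2)
    have h5 := t.mem (u (ee k))
    dsimp only
    rw [← hRnu _ hr]
    exact h5
  surj := by
    intro c hc
    have hki : 0 < kappa c.1 := by omega
    obtain ⟨hfR, hφf⟩ := hRmem c.1 hki
    have hnuf : nu (f c.1) = kappa c.1 := by rw [hRnu _ hfR, hφf]
    obtain ⟨k₀, hk₀⟩ := t.surj (f c.1, c.2) (by dsimp only; omega)
    have hk₀E : k₀ ∈ E := (hR k₀).mpr (by rw [hk₀]; exact hfR)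
    have hiE : u⁻¹ k₀ ∈ E := by
      rw [hu (u⁻¹ k₀)]
      simpa using hk₀E
    refine ⟨ee.symm ⟨u⁻¹ k₀, hiE⟩, ?_⟩
    rw [Equiv.apply_symm_apply]
    simp only [Equiv.Perm.apply_inv_self, hk₀]
    exact Prod.ext hφf rfl

end SchaperRestr

section SchaperSide
open Finset Equiv Equiv.Perm

lemma psgn_conj {q : ℕ} (u c : Equiv.Perm (Fin q)) : psgn (u⁻¹ * c * u) = psgn c := by
  unfold psgn
  rw [Equiv.Perm.sign_mul, Equiv.Perm.sign_mul, Equiv.Perm.sign_inv]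
  push_cast
  have h := psgn_mul_self u
  unfold psgn at h
  linear_combination ((Equiv.Perm.sign c : ℤˣ) : ℤ) * h

lemma side_dvd {N q : ℕ} {nu kappa : ℕ → ℕ} (s t : YTableau N nu)
    (E : Finset (Fin N)) (R : Finset ℕ) (φ f : ℕ → ℕ) (u : Equiv.Perm (Fin N))
    (ee : Fin q ≃ {x : Fin N // x ∈ E})
    (hR_s : ∀ k, k ∈ E ↔ (s.pos k).1 ∈ R)
    (hR_t : ∀ k, k ∈ E ↔ (t.pos k).1 ∈ R)
    (hRnu : ∀ r ∈ R, nu r = kappa (φ r))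
    (hRφf : ∀ r ∈ R, f (φ r) = r)
    (hRmem : ∀ i, 0 < kappa i → f i ∈ R ∧ φ (f i) = i)
    (hu : ∀ k, k ∈ E ↔ u k ∈ E)
    (d : ℤ) (hdvd : ∀ s' t' : YTableau q kappa, d ∣ innerSum s' t') :
    d ∣ ∑ a ∈ (colStab s).filter (fun a => ∀ k, k ∉ E → a k = k),
        ∑ c ∈ (colStab t).filter (fun c => ∀ k, k ∉ E → c k = k),
        psgn a * psgn c *
          (if (∀ j ∈ E, (s.pos (a⁻¹ j)).1 = (t.pos (c⁻¹ (u j))).1) then (1:ℤ) else 0) := by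
  classical
  have hone : ∀ k : Fin N, k ∈ E ↔ (1 : Equiv.Perm (Fin N)) k ∈ E := by intro k; simp
  set sκ : YTableau q kappa := restrTab s 1 E R φ f ee hR_s hRnu hRφf hRmem hone with hsκdef
  set tκ : YTableau q kappa := restrTab t u E R φ f ee hR_t hRnu hRφf hRmem hu with htκdef
  have hφinj : ∀ r ∈ R, ∀ r' ∈ R, φ r = φ r' → r = r' := by
    intro r hr r' hr' h
    rw [← hRφf r hr, ← hRφf r' hr', h]
  have key : ∑ a ∈ (colStab s).filter (fun a => ∀ k, k ∉ E → a k = k),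
        ∑ c ∈ (colStab t).filter (fun c => ∀ k, k ∉ E → c k = k),
        psgn a * psgn c *
          (if (∀ j ∈ E, (s.pos (a⁻¹ j)).1 = (t.pos (c⁻¹ (u j))).1) then (1:ℤ) else 0)
      = innerSum sκ tκ := by
    unfold innerSum
    rw [← Finset.sum_product', ← Finset.sum_product']
    refine Finset.sum_nbij'
      (i := fun x => (restrPerm ee x.1, restrPerm ee (u⁻¹ * x.2 * u)))
      (j := fun y => (extPerm ee y.1, u * extPerm ee y.2 * u⁻¹)) ?_ ?_ ?_ ?_ ?_
    -- forward membership
    · rintro ⟨a, c⟩ hx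
      rw [Finset.mem_product] at hx ⊢
      obtain ⟨ha, hc⟩ := hx
      rw [Finset.mem_filter] at ha hc
      obtain ⟨haC, haF⟩ := ha
      obtain ⟨hcC, hcF⟩ := hc
      have hapres := pres_of_fix_outside haF
      have hcF' : ∀ k, k ∉ E → (u⁻¹ * c * u) k = k := by
        intro k hk
        have h1 : u k ∉ E := fun hh => hk ((hu k).mpr hh)
        simp only [Equiv.Perm.mul_apply]
        rw [hcF (u k) h1]
        simp
      have hcpres := pres_of_fix_outside hcF'
      constructor
      · rw [mem_colStab]
        intro k
        have e1 : (ee (restrPerm ee a k) : Fin N) = a (ee k) := restrPerm_apply ee hapres k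
        show (sκ.pos (restrPerm ee a k)).2 = (sκ.pos k).2
        rw [hsκdef]
        show (s.pos ((1 : Equiv.Perm (Fin N)) (ee (restrPerm ee a k)))).2
          = (s.pos ((1 : Equiv.Perm (Fin N)) (ee k))).2
        simp only [Equiv.Perm.one_apply, e1]
        rw [mem_colStab] at haC
        exact haC (ee k)
      · rw [mem_colStab]
        intro k
        have e1 : (ee (restrPerm ee (u⁻¹ * c * u) k) : Fin N) = (u⁻¹ * c * u) (ee k) :=
          restrPerm_apply ee hcpres k
        show (tκ.pos (restrPerm ee (u⁻¹ * c * u) k)).2 = (tκ.pos k).2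
        rw [htκdef]
        show (t.pos (u (ee (restrPerm ee (u⁻¹ * c * u) k)))).2 = (t.pos (u (ee k))).2
        rw [e1]
        simp only [Equiv.Perm.mul_apply, Equiv.Perm.apply_inv_self]
        rw [mem_colStab] at hcC
        exact hcC (u (ee k))
    -- backward membership
    · rintro ⟨π, ρ⟩ hy
      rw [Finset.mem_product] at hy ⊢
      obtain ⟨hπ, hρ⟩ := hy
      constructor
      · rw [Finset.mem_filter]
        refine ⟨?_, extPerm_fix_outside ee π⟩
        rw [mem_colStab]
        intro x
        by_cases hx : x ∈ E
        · have e0 : x = ((ee (ee.symm ⟨x, hx⟩) : Fin N)) := by rw [Equiv.apply_symm_apply]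
          rw [e0, extPerm_apply_ee]
          rw [mem_colStab] at hπ
          have := hπ (ee.symm ⟨x, hx⟩)
          rw [hsκdef] at this
          exact this
        · rw [extPerm_apply_not_mem ee π hx]
      · rw [Finset.mem_filter]
        have hfix : ∀ k, k ∉ E → (u * extPerm ee ρ * u⁻¹) k = k := by
          intro k hk
          have h1 : u⁻¹ k ∉ E := by
            intro hh
            exact hk (by simpa using (hu (u⁻¹ k)).mp hh)
          simp only [Equiv.Perm.mul_apply]
          rw [extPerm_apply_not_mem ee ρ h1]
          simp
        refine ⟨?_, hfix⟩
        rw [mem_colStab]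
        intro x
        by_cases hx : x ∈ E
        · have hx' : u⁻¹ x ∈ E := by
            rw [hu (u⁻¹ x)]
            simpa using hx
          have e0 : u⁻¹ x = ((ee (ee.symm ⟨u⁻¹ x, hx'⟩) : Fin N)) := by
            rw [Equiv.apply_symm_apply]
          simp only [Equiv.Perm.mul_apply]
          rw [e0, extPerm_apply_ee]
          rw [mem_colStab] at hρ
          have h2 := hρ (ee.symm ⟨u⁻¹ x, hx'⟩)
          rw [htκdef] at h2
          have h3 : (t.pos (u (ee (ρ (ee.symm ⟨u⁻¹ x, hx'⟩))))).2
              = (t.pos (u (ee (ee.symm ⟨u⁻¹ x, hx'⟩)))).2 := h2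
          rw [h3, ← e0]
          simp
        · have h1 : u⁻¹ x ∉ E := by
            intro hh
            exact hx (by simpa using (hu (u⁻¹ x)).mp hh)
          simp only [Equiv.Perm.mul_apply]
          rw [extPerm_apply_not_mem ee ρ h1]
          simp
    -- left inverse
    · rintro ⟨a, c⟩ hx
      rw [Finset.mem_product] at hx
      obtain ⟨ha, hc⟩ := hx
      rw [Finset.mem_filter] at ha hc
      have hcF' : ∀ k, k ∉ E → (u⁻¹ * c * u) k = k := by
        intro k hk
        have h1 : u k ∉ E := fun hh => hk ((hu k).mpr hh)
        simp only [Equiv.Perm.mul_apply]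
        rw [hc.2 (u k) h1]
        simp
      dsimp only
      rw [ext_restr ee ha.2, ext_restr ee hcF']
      refine Prod.ext rfl ?_
      dsimp only
      group
    -- right inverse
    · rintro ⟨π, ρ⟩ _
      dsimp only
      rw [restr_ext ee π]
      refine Prod.ext rfl ?_
      dsimp only
      have e1 : u⁻¹ * (u * extPerm ee ρ * u⁻¹) * u = extPerm ee ρ := by group
      rw [e1, restr_ext ee ρ]
    -- term equality
    · rintro ⟨a, c⟩ hx
      rw [Finset.mem_product] at hx
      obtain ⟨ha, hc⟩ := hx
      rw [Finset.mem_filter] at ha hc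
      obtain ⟨haC, haF⟩ := ha
      obtain ⟨hcC, hcF⟩ := hc
      have hcF' : ∀ k, k ∉ E → (u⁻¹ * c * u) k = k := by
        intro k hk
        have h1 : u k ∉ E := fun hh => hk ((hu k).mpr hh)
        simp only [Equiv.Perm.mul_apply]
        rw [hcF (u k) h1]
        simp
      set π := restrPerm ee a with hπdef
      set ρ := restrPerm ee (u⁻¹ * c * u) with hρdef
      have hea : extPerm ee π = a := ext_restr ee haF
      have hec : extPerm ee ρ = u⁻¹ * c * u := ext_restr ee hcF'
      have claimA : ∀ k : Fin q, (ee (π⁻¹ k) : Fin N) = a⁻¹ (ee k) := by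
        intro k
        rw [← hea, extPerm_inv, extPerm_apply_ee]
      have claimB : ∀ k : Fin q, c⁻¹ (u (ee k)) = u (ee (ρ⁻¹ k)) := by
        intro k
        have hc' : c⁻¹ = u * (extPerm ee ρ⁻¹) * u⁻¹ := by
          rw [← extPerm_inv, hec]
          group
        rw [hc']
        simp only [Equiv.Perm.mul_apply]
        rw [Equiv.Perm.inv_apply_self, extPerm_apply_ee]
      have hsgnπ : psgn π = psgn a := psgn_restrPerm ee haF
      have hsgnρ : psgn ρ = psgn c := by
        rw [hρdef, psgn_restrPerm ee hcF', psgn_conj]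
      have hiff : (∀ j ∈ E, (s.pos (a⁻¹ j)).1 = (t.pos (c⁻¹ (u j))).1)
          ↔ rowfun sκ π = rowfun tκ ρ := by
        constructor
        · intro hyp
          funext k
          show (sκ.pos (π⁻¹ k)).1 = (tκ.pos (ρ⁻¹ k)).1
          show φ (s.pos ((1 : Equiv.Perm (Fin N)) (ee (π⁻¹ k)))).1
            = φ (t.pos (u (ee (ρ⁻¹ k)))).1
          rw [Equiv.Perm.one_apply, claimA k, ← claimB k]
          exact congrArg φ (hyp (ee k) (ee k).2)
        · intro hyp j hj
          have hk := congrFun hyp (ee.symm ⟨j, hj⟩)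
          have hk' : φ (s.pos ((1 : Equiv.Perm (Fin N))
                ((ee (π⁻¹ (ee.symm ⟨j, hj⟩))) : Fin N))).1
              = φ (t.pos (u (ee (ρ⁻¹ (ee.symm ⟨j, hj⟩))))).1 := hk
          rw [Equiv.Perm.one_apply, claimA (ee.symm ⟨j, hj⟩),
            ← claimB (ee.symm ⟨j, hj⟩)] at hk'
          have hj1 : ((ee (ee.symm ⟨j, hj⟩)) : Fin N) = j := by rw [Equiv.apply_symm_apply]
          rw [hj1] at hk'
          have hm1 : a⁻¹ j ∈ E := by
            have hh := pres_of_fix_outside haF (a⁻¹ j)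
            rw [Equiv.Perm.apply_inv_self] at hh
            exact hh.mpr hj
          have hm2 : c⁻¹ (u j) ∈ E := by
            have h1 : u j ∈ E := (hu j).mp hj
            have hh := pres_of_fix_outside hcF (c⁻¹ (u j))
            rw [Equiv.Perm.apply_inv_self] at hh
            exact hh.mpr h1
          exact hφinj _ ((hR_s _).mp hm1) _ ((hR_t _).mp hm2) hk'
      dsimp only
      rw [if_congr hiff rfl rfl, hsgnπ, hsgnρ]
  rw [key]
  exact hdvd sκ tκ

end SchaperSide

section SchaperFactor
open Finset Equiv Equiv.Perm

variable {N : ℕ}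

/-- the part of a permutation acting on `E`, extended by the identity -/
noncomputable def pePerm (E : Finset (Fin N)) (σ : Equiv.Perm (Fin N)) : Equiv.Perm (Fin N) :=
  if h : ∀ x : Fin N, x ∈ E ↔ σ x ∈ E then
    (σ.subtypePerm (fun x => (h x).symm)).extendDomain (Equiv.refl {x : Fin N // x ∈ E})
  else 1

lemma pePerm_apply_mem {E : Finset (Fin N)} {σ : Equiv.Perm (Fin N)}
    (h : ∀ x : Fin N, x ∈ E ↔ σ x ∈ E) {x : Fin N} (hx : x ∈ E) :
    pePerm E σ x = σ x := by
  unfold pePerm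
  rw [dif_pos h]
  have := Equiv.Perm.extendDomain_apply_subtype (p := fun x : Fin N => x ∈ E)
    (σ.subtypePerm (fun x => (h x).symm)) (Equiv.refl {x : Fin N // x ∈ E}) hx
  rw [this]
  rfl

lemma pePerm_apply_not_mem {E : Finset (Fin N)} (σ : Equiv.Perm (Fin N))
    {x : Fin N} (hx : x ∉ E) : pePerm E σ x = x := by
  unfold pePerm
  by_cases h : ∀ x : Fin N, x ∈ E ↔ σ x ∈ E
  · rw [dif_pos h]
    exact Equiv.Perm.extendDomain_apply_not_subtype (p := fun x : Fin N => x ∈ E)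
      (σ.subtypePerm (fun x => (h x).symm)) (Equiv.refl {x : Fin N // x ∈ E}) hx
  · rw [dif_neg h]
    rfl

lemma image_pres {E : Finset (Fin N)} {σ : Equiv.Perm (Fin N)} (h : E.image ⇑σ = E) :
    ∀ x : Fin N, x ∈ E ↔ σ x ∈ E := by
  intro x
  constructor
  · intro hx
    rw [← h]
    exact Finset.mem_image_of_mem _ hx
  · intro hx
    rw [← h] at hx
    rw [Finset.mem_image] at hx
    obtain ⟨y, hy, hyx⟩ := hx
    rwa [← σ.injective hyx]

lemma fix_outside_inv {E : Finset (Fin N)} {σ : Equiv.Perm (Fin N)}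
    (h : ∀ k, k ∉ E → σ k = k) : ∀ k, k ∉ E → σ⁻¹ k = k := by
  intro k hk
  conv_lhs => rw [← h k hk]
  simp

lemma image_eq_of_fix_outside {E : Finset (Fin N)} {σ : Equiv.Perm (Fin N)}
    (h : ∀ k, k ∉ E → σ k = k) : E.image ⇑σ = E := by
  refine Finset.eq_of_subset_of_card_le ?_ ?_
  · intro x hx
    rw [Finset.mem_image] at hx
    obtain ⟨y, hy, rfl⟩ := hx
    exact (pres_of_fix_outside h y).mp hy
  · rw [Finset.card_image_of_injective _ σ.injective]

/-- main factorisation of the (reindexed) inner sum along a row-splitting -/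
lemma factor_sum {nu : ℕ → ℕ} (s t : YTableau N nu) (E Em : Finset (Fin N))
    (hsplit : ∀ k : Fin N, k ∈ Em ↔ k ∉ E)
    (u : Equiv.Perm (Fin N)) (hu : ∀ k, k ∈ E ↔ u k ∈ E) :
    ∑ σ ∈ (colStab s).filter (fun σ : Equiv.Perm (Fin N) => E.image ⇑σ = E),
      ∑ τ ∈ (colStab t).filter (fun τ : Equiv.Perm (Fin N) => E.image ⇑τ = E),
        psgn σ * psgn τ *
          (if (∀ j, (s.pos (σ⁻¹ j)).1 = (t.pos (τ⁻¹ (u j))).1) then (1:ℤ) else 0)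
    = (∑ a ∈ (colStab s).filter (fun a => ∀ k, k ∉ E → a k = k),
        ∑ c ∈ (colStab t).filter (fun c => ∀ k, k ∉ E → c k = k),
        psgn a * psgn c *
          (if (∀ j ∈ E, (s.pos (a⁻¹ j)).1 = (t.pos (c⁻¹ (u j))).1) then (1:ℤ) else 0))
      * (∑ b ∈ (colStab s).filter (fun b => ∀ k, k ∉ Em → b k = k),
        ∑ d ∈ (colStab t).filter (fun d => ∀ k, k ∉ Em → d k = k),
        psgn b * psgn d *
          (if (∀ j ∈ Em, (s.pos (b⁻¹ j)).1 = (t.pos (d⁻¹ (u j))).1) then (1:ℤ) else 0)) := by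
  classical
  have huEm : ∀ k, k ∈ Em ↔ u k ∈ Em := by
    intro k
    rw [hsplit, hsplit]
    constructor
    · intro hk hc
      exact hk ((hu k).mpr hc)
    · intro hk hc
      exact hk ((hu k).mp hc)
  -- convert RHS factors to sums over product sets
  rw [← Finset.sum_product'] -- LHS
  rw [← Finset.sum_product', ← Finset.sum_product']
  rw [Finset.sum_mul_sum]
  rw [← Finset.sum_product']
  -- now both sides are single sums over product finsets
  refine Finset.sum_nbij'
    (i := fun x => ((pePerm E x.1, pePerm E x.2), (pePerm Em x.1, pePerm Em x.2)))
    (j := fun y => (y.1.1 * y.2.1, y.1.2 * y.2.2)) ?_ ?_ ?_ ?_ ?_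
  · -- forward membership
    rintro ⟨σ, τ⟩ hx
    rw [Finset.mem_product] at hx
    obtain ⟨hσ, hτ⟩ := hx
    rw [Finset.mem_filter] at hσ hτ
    have hσE := image_pres hσ.2
    have hτE := image_pres hτ.2
    have hσEm : ∀ x : Fin N, x ∈ Em ↔ σ x ∈ Em := by
      intro x
      rw [hsplit, hsplit, not_iff_not]
      exact hσE x
    have hτEm : ∀ x : Fin N, x ∈ Em ↔ τ x ∈ Em := by
      intro x
      rw [hsplit, hsplit, not_iff_not]
      exact hτE x
    have hmm : ∀ (w : YTableau N nu) (π : Equiv.Perm (Fin N)) (F : Finset (Fin N)),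
        π ∈ colStab w → (∀ x : Fin N, x ∈ F ↔ π x ∈ F) →
        pePerm F π ∈ (colStab w).filter (fun a => ∀ k, k ∉ F → a k = k) := by
      intro w π F hπ hπF
      rw [Finset.mem_filter]
      constructor
      · rw [mem_colStab] at hπ ⊢
        intro k
        by_cases hk : k ∈ F
        · rw [pePerm_apply_mem hπF hk]
          exact hπ k
        · rw [pePerm_apply_not_mem π hk]
      · intro k hk
        exact pePerm_apply_not_mem π hk
    simp only [Finset.mem_product]
    exact ⟨⟨hmm s σ E hσ.1 hσE, hmm t τ E hτ.1 hτE⟩,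
           ⟨hmm s σ Em hσ.1 hσEm, hmm t τ Em hτ.1 hτEm⟩⟩
  · -- backward membership
    rintro ⟨⟨a, c⟩, ⟨b, d⟩⟩ hy
    simp only [Finset.mem_product, Finset.mem_filter] at hy
    obtain ⟨⟨ha, hc⟩, hb, hd⟩ := hy
    have himg : ∀ (w : YTableau N nu) (a b : Equiv.Perm (Fin N)),
        a ∈ colStab w → (∀ k, k ∉ E → a k = k) → b ∈ colStab w → (∀ k, k ∉ Em → b k = k) →
        (a * b) ∈ colStab w ∧ E.image ⇑(a * b) = E := by
      intro w a b haC haF hbC hbF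
      refine ⟨mul_mem_colStab haC hbC, ?_⟩
      refine Finset.eq_of_subset_of_card_le ?_ ?_
      · intro x hx
        rw [Finset.mem_image] at hx
        obtain ⟨k, hk, rfl⟩ := hx
        have hkEm : k ∉ Em := fun hc' => ((hsplit k).mp hc') hk
        have e1 : (a * b) k = a k := by
          simp only [Equiv.Perm.mul_apply]
          rw [hbF k hkEm]
        rw [e1]
        exact (pres_of_fix_outside haF k).mp hk
      · rw [Finset.card_image_of_injective _ (a * b).injective]
    rw [Finset.mem_product, Finset.mem_filter, Finset.mem_filter]
    exact ⟨⟨(himg s a b ha.1 ha.2 hb.1 hb.2).1, (himg s a b ha.1 ha.2 hb.1 hb.2).2⟩,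
           ⟨(himg t c d hc.1 hc.2 hd.1 hd.2).1, (himg t c d hc.1 hc.2 hd.1 hd.2).2⟩⟩
  · -- left inverse : (pePerm E σ) * (pePerm Em σ) = σ etc.
    rintro ⟨σ, τ⟩ hx
    rw [Finset.mem_product, Finset.mem_filter, Finset.mem_filter] at hx
    obtain ⟨hσ, hτ⟩ := hx
    have hrec : ∀ π : Equiv.Perm (Fin N), (∀ x : Fin N, x ∈ E ↔ π x ∈ E) →
        pePerm E π * pePerm Em π = π := by
      intro π hπE
      have hπEm : ∀ x : Fin N, x ∈ Em ↔ π x ∈ Em := by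
        intro x
        rw [hsplit, hsplit, not_iff_not]
        exact hπE x
      apply Equiv.ext
      intro x
      by_cases hx : x ∈ E
      · have hxEm : x ∉ Em := fun hc' => ((hsplit x).mp hc') hx
        simp only [Equiv.Perm.mul_apply]
        rw [pePerm_apply_not_mem π hxEm, pePerm_apply_mem hπE hx]
      · have hxEm : x ∈ Em := (hsplit x).mpr hx
        simp only [Equiv.Perm.mul_apply]
        rw [pePerm_apply_mem hπEm hxEm]
        have hπx : π x ∉ E := fun hc' => hx ((hπE x).mpr hc')
        rw [pePerm_apply_not_mem π hπx]
    dsimp only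
    rw [hrec σ (image_pres hσ.2), hrec τ (image_pres hτ.2)]
  · -- right inverse
    rintro ⟨⟨a, c⟩, ⟨b, d⟩⟩ hy
    simp only [Finset.mem_product, Finset.mem_filter] at hy
    obtain ⟨⟨ha, hc⟩, hb, hd⟩ := hy
    have hkey : ∀ a b : Equiv.Perm (Fin N), (∀ k, k ∉ E → a k = k) →
        (∀ k, k ∉ Em → b k = k) →
        pePerm E (a * b) = a ∧ pePerm Em (a * b) = b := by
      intro a b haF hbF
      have hpresE : ∀ x : Fin N, x ∈ E ↔ (a * b) x ∈ E := by
        intro x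
        constructor
        · intro hx
          have hxEm : x ∉ Em := fun hc' => ((hsplit x).mp hc') hx
          simp only [Equiv.Perm.mul_apply]
          rw [hbF x hxEm]
          exact (pres_of_fix_outside haF x).mp hx
        · intro hx
          by_contra hxE
          have hxEm : x ∈ Em := (hsplit x).mpr hxE
          have hbx : b x ∈ Em := (pres_of_fix_outside hbF x).mp hxEm
          have hbxE : b x ∉ E := (hsplit (b x)).mp hbx
          have : (a * b) x = b x := by
            simp only [Equiv.Perm.mul_apply]
            rw [haF (b x) hbxE]
          rw [this] at hx
          exact hbxE hx
      have hpresEm : ∀ x : Fin N, x ∈ Em ↔ (a * b) x ∈ Em := by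
        intro x
        rw [hsplit, hsplit, not_iff_not]
        exact hpresE x
      constructor
      · apply Equiv.ext
        intro x
        by_cases hx : x ∈ E
        · rw [pePerm_apply_mem hpresE hx]
          have hxEm : x ∉ Em := fun hc' => ((hsplit x).mp hc') hx
          simp only [Equiv.Perm.mul_apply]
          rw [hbF x hxEm]
        · rw [pePerm_apply_not_mem _ hx, haF x hx]
      · apply Equiv.ext
        intro x
        by_cases hx : x ∈ Em
        · rw [pePerm_apply_mem hpresEm hx]
          have hbx : b x ∈ Em := (pres_of_fix_outside hbF x).mp hx
          have hbxE : b x ∉ E := (hsplit (b x)).mp hbx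
          simp only [Equiv.Perm.mul_apply]
          rw [haF (b x) hbxE]
        · rw [pePerm_apply_not_mem _ hx, hbF x hx]
    obtain ⟨e1, e2⟩ := hkey a b ha.2 hb.2
    obtain ⟨e3, e4⟩ := hkey c d hc.2 hd.2
    dsimp only
    rw [e1, e2, e3, e4]
  · -- term equality
    rintro ⟨σ, τ⟩ hx
    rw [Finset.mem_product, Finset.mem_filter, Finset.mem_filter] at hx
    obtain ⟨hσ, hτ⟩ := hx
    have hσE := image_pres hσ.2
    have hτE := image_pres hτ.2
    have hσEm : ∀ x : Fin N, x ∈ Em ↔ σ x ∈ Em := by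
      intro x; rw [hsplit, hsplit, not_iff_not]; exact hσE x
    have hτEm : ∀ x : Fin N, x ∈ Em ↔ τ x ∈ Em := by
      intro x; rw [hsplit, hsplit, not_iff_not]; exact hτE x
    set a := pePerm E σ with hadef
    set b := pePerm Em σ with hbdef
    set c := pePerm E τ with hcdef
    set dd := pePerm Em τ with hddef
    have hab : a * b = σ := by
      apply Equiv.ext
      intro x
      by_cases hx : x ∈ E
      · have hxEm : x ∉ Em := fun hc' => ((hsplit x).mp hc') hx
        simp only [Equiv.Perm.mul_apply]
        rw [hbdef, pePerm_apply_not_mem σ hxEm, hadef, pePerm_apply_mem hσE hx]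
      · have hxEm : x ∈ Em := (hsplit x).mpr hx
        simp only [Equiv.Perm.mul_apply]
        rw [hbdef, pePerm_apply_mem hσEm hxEm]
        have hσx : σ x ∉ E := fun hc' => hx ((hσE x).mpr hc')
        rw [hadef, pePerm_apply_not_mem σ hσx]
    have hcd : c * dd = τ := by
      apply Equiv.ext
      intro x
      by_cases hx : x ∈ E
      · have hxEm : x ∉ Em := fun hc' => ((hsplit x).mp hc') hx
        simp only [Equiv.Perm.mul_apply]
        rw [hddef, pePerm_apply_not_mem τ hxEm, hcdef, pePerm_apply_mem hτE hx]
      · have hxEm : x ∈ Em := (hsplit x).mpr hx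
        simp only [Equiv.Perm.mul_apply]
        rw [hddef, pePerm_apply_mem hτEm hxEm]
        have hτx : τ x ∉ E := fun hc' => hx ((hτE x).mpr hc')
        rw [hcdef, pePerm_apply_not_mem τ hτx]
    -- pointwise facts for the inverse permutations
    have haF : ∀ k, k ∉ E → a k = k := fun k hk => pePerm_apply_not_mem σ hk
    have hbF : ∀ k, k ∉ Em → b k = k := fun k hk => pePerm_apply_not_mem σ hk
    have hcF : ∀ k, k ∉ E → c k = k := fun k hk => pePerm_apply_not_mem τ hk
    have hdF : ∀ k, k ∉ Em → dd k = k := fun k hk => pePerm_apply_not_mem τ hk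
    have hiffE : ∀ j, j ∈ E → σ⁻¹ j = a⁻¹ j := by
      intro j hj
      rw [← hab]
      simp only [mul_inv_rev, Equiv.Perm.mul_apply]
      have h1 : a⁻¹ j ∈ E := by
        have := pres_of_fix_outside haF (a⁻¹ j)
        rw [Equiv.Perm.apply_inv_self] at this
        exact this.mpr hj
      have h2 : a⁻¹ j ∉ Em := fun hc' => ((hsplit _).mp hc') h1
      rw [fix_outside_inv hbF _ h2]
    have hiffEm : ∀ j, j ∈ Em → σ⁻¹ j = b⁻¹ j := by
      intro j hj
      rw [← hab]
      simp only [mul_inv_rev, Equiv.Perm.mul_apply]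
      have h1 : j ∉ E := (hsplit j).mp hj
      rw [fix_outside_inv haF _ h1]
    have hiffE' : ∀ j, j ∈ E → τ⁻¹ j = c⁻¹ j := by
      intro j hj
      rw [← hcd]
      simp only [mul_inv_rev, Equiv.Perm.mul_apply]
      have h1 : c⁻¹ j ∈ E := by
        have := pres_of_fix_outside hcF (c⁻¹ j)
        rw [Equiv.Perm.apply_inv_self] at this
        exact this.mpr hj
      have h2 : c⁻¹ j ∉ Em := fun hc' => ((hsplit _).mp hc') h1
      rw [fix_outside_inv hdF _ h2]
    have hiffEm' : ∀ j, j ∈ Em → τ⁻¹ j = dd⁻¹ j := by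
      intro j hj
      rw [← hcd]
      simp only [mul_inv_rev, Equiv.Perm.mul_apply]
      have h1 : j ∉ E := (hsplit j).mp hj
      rw [fix_outside_inv hcF _ h1]
    have hiff : (∀ j, (s.pos (σ⁻¹ j)).1 = (t.pos (τ⁻¹ (u j))).1) ↔
        ((∀ j ∈ E, (s.pos (a⁻¹ j)).1 = (t.pos (c⁻¹ (u j))).1) ∧
         (∀ j ∈ Em, (s.pos (b⁻¹ j)).1 = (t.pos (dd⁻¹ (u j))).1)) := by
      constructor
      · intro h
        constructor
        · intro j hj
          have := h j
          rwa [hiffE j hj, hiffE' (u j) ((hu j).mp hj)] at this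
        · intro j hj
          have := h j
          rwa [hiffEm j hj, hiffEm' (u j) ((huEm j).mp hj)] at this
      · rintro ⟨h1, h2⟩ j
        by_cases hj : j ∈ E
        · rw [hiffE j hj, hiffE' (u j) ((hu j).mp hj)]
          exact h1 j hj
        · have hjEm : j ∈ Em := (hsplit j).mpr hj
          rw [hiffEm j hjEm, hiffEm' (u j) ((huEm j).mp hjEm)]
          exact h2 j hjEm
    have hsgnσ : psgn σ = psgn a * psgn b := by rw [← hab, psgn_mul]
    have hsgnτ : psgn τ = psgn c * psgn dd := by rw [← hcd, psgn_mul]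
    dsimp only
    rw [if_congr hiff rfl rfl, hsgnσ, hsgnτ]
    by_cases h1 : (∀ j ∈ E, (s.pos (a⁻¹ j)).1 = (t.pos (c⁻¹ (u j))).1)
    · by_cases h2 : (∀ j ∈ Em, (s.pos (b⁻¹ j)).1 = (t.pos (dd⁻¹ (u j))).1)
      · rw [if_pos (And.intro h1 h2), if_pos h1, if_pos h2]
        ring
      · rw [if_neg (fun hc' => h2 hc'.2), if_pos h1, if_neg h2]
        ring
    · by_cases h2 : (∀ j ∈ Em, (s.pos (b⁻¹ j)).1 = (t.pos (dd⁻¹ (u j))).1)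
      · rw [if_neg (fun hc' => h1 hc'.1), if_neg h1, if_pos h2]
        ring
      · rw [if_neg (fun hc' => h1 hc'.1), if_neg h1, if_neg h2]
        ring

end SchaperFactor

section SchaperRegroup
open Finset Equiv Equiv.Perm

lemma psgn_inv {q : ℕ} (σ : Equiv.Perm (Fin q)) : psgn σ⁻¹ = psgn σ := by
  simp [psgn]

lemma image_mul_left {N : ℕ} (E S : Finset (Fin N)) (g k : Equiv.Perm (Fin N))
    (hgS : E.image ⇑g = S) (hkS : E.image ⇑k = S) : E.image ⇑(g⁻¹ * k) = E := by
  have h1 : ⇑(g⁻¹ * k) = ⇑g⁻¹ ∘ ⇑k := by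
    funext x
    simp [Equiv.Perm.mul_apply]
  rw [h1, ← Finset.image_image, hkS, ← hgS, Finset.image_image]
  have h2 : ⇑g⁻¹ ∘ ⇑g = id := by
    funext x
    simp
  rw [h2, Finset.image_id]

lemma regroup_sum {N : ℕ} {nu : ℕ → ℕ} (s t : YTableau N nu) (E S : Finset (Fin N))
    (g h : Equiv.Perm (Fin N)) (hgC : g ∈ colStab s) (hgS : E.image ⇑g = S)
    (hhC : h ∈ colStab t) (hhS : E.image ⇑h = S) :
    ∑ σ ∈ (colStab s).filter (fun σ : Equiv.Perm (Fin N) => E.image ⇑σ = S),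
      ∑ τ ∈ (colStab t).filter (fun τ : Equiv.Perm (Fin N) => E.image ⇑τ = S),
        psgn σ * psgn τ * (if rowfun s σ = rowfun t τ then (1:ℤ) else 0)
    = psgn g * psgn h *
      ∑ σ ∈ (colStab s).filter (fun σ : Equiv.Perm (Fin N) => E.image ⇑σ = E),
        ∑ τ ∈ (colStab t).filter (fun τ : Equiv.Perm (Fin N) => E.image ⇑τ = E),
          psgn σ * psgn τ *
            (if (∀ j, (s.pos (σ⁻¹ j)).1 = (t.pos (τ⁻¹ ((h⁻¹ * g) j))).1) then (1:ℤ) else 0) := by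
  classical
  rw [← Finset.sum_product', ← Finset.sum_product', Finset.mul_sum]
  refine Finset.sum_nbij' (i := fun x => (g⁻¹ * x.1, h⁻¹ * x.2))
    (j := fun y => (g * y.1, h * y.2)) ?_ ?_ ?_ ?_ ?_
  · rintro ⟨σ, τ⟩ hx
    rw [Finset.mem_product, Finset.mem_filter, Finset.mem_filter] at hx
    obtain ⟨hσ, hτ⟩ := hx
    rw [Finset.mem_product, Finset.mem_filter, Finset.mem_filter]
    exact ⟨⟨mul_mem_colStab (inv_mem_colStab hgC) hσ.1, image_mul_left E S g σ hgS hσ.2⟩,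
      ⟨mul_mem_colStab (inv_mem_colStab hhC) hτ.1, image_mul_left E S h τ hhS hτ.2⟩⟩
  · rintro ⟨σ, τ⟩ hy
    rw [Finset.mem_product, Finset.mem_filter, Finset.mem_filter] at hy
    obtain ⟨hσ, hτ⟩ := hy
    rw [Finset.mem_product, Finset.mem_filter, Finset.mem_filter]
    have e1 : ⇑(g * σ) = ⇑g ∘ ⇑σ := by funext x; simp [Equiv.Perm.mul_apply]
    have e2 : ⇑(h * τ) = ⇑h ∘ ⇑τ := by funext x; simp [Equiv.Perm.mul_apply]
    constructor
    · refine ⟨mul_mem_colStab hgC hσ.1, ?_⟩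
      rw [e1, ← Finset.image_image, hσ.2, hgS]
    · refine ⟨mul_mem_colStab hhC hτ.1, ?_⟩
      rw [e2, ← Finset.image_image, hτ.2, hhS]
  · rintro ⟨σ, τ⟩ _
    dsimp only
    rw [← mul_assoc, ← mul_assoc]
    simp
  · rintro ⟨σ, τ⟩ _
    dsimp only
    rw [← mul_assoc, ← mul_assoc]
    simp
  · rintro ⟨σ, τ⟩ hx
    rw [Finset.mem_product, Finset.mem_filter, Finset.mem_filter] at hx
    obtain ⟨hσ, hτ⟩ := hx
    dsimp only
    have hsgn1 : psgn (g⁻¹ * σ) = psgn g * psgn σ := by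
      rw [psgn_mul, psgn_inv]
    have hsgn2 : psgn (h⁻¹ * τ) = psgn h * psgn τ := by
      rw [psgn_mul, psgn_inv]
    have hiff : (rowfun s σ = rowfun t τ) ↔
        (∀ j, (s.pos ((g⁻¹ * σ)⁻¹ j)).1 = (t.pos ((h⁻¹ * τ)⁻¹ ((h⁻¹ * g) j))).1) := by
      have ea : ∀ j, (g⁻¹ * σ)⁻¹ j = σ⁻¹ (g j) := by
        intro j
        simp [Equiv.Perm.mul_apply]
      have eb : ∀ j, (h⁻¹ * τ)⁻¹ ((h⁻¹ * g) j) = τ⁻¹ (g j) := by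
        intro j
        simp [Equiv.Perm.mul_apply]
      constructor
      · intro hr j
        rw [ea j, eb j]
        exact congrFun hr (g j)
      · intro hyp
        funext k
        have := hyp (g⁻¹ k)
        rw [ea, eb] at this
        simpa [rowfun] using this
    rw [if_congr hiff rfl rfl, hsgn1, hsgn2]
    have := psgn_mul_self g
    have := psgn_mul_self h
    by_cases hc : (∀ j, (s.pos ((g⁻¹ * σ)⁻¹ j)).1 = (t.pos ((h⁻¹ * τ)⁻¹ ((h⁻¹ * g) j))).1)
    · rw [if_pos hc]
      rw [show psgn g * psgn h * (psgn g * psgn σ * (psgn h * psgn τ) * 1)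
        = (psgn g * psgn g) * (psgn h * psgn h) * (psgn σ * psgn τ) by ring,
        psgn_mul_self, psgn_mul_self]
      ring
    · rw [if_neg hc]
      ring

lemma fiber_card {N : ℕ} {nu : ℕ → ℕ} (t : YTableau N nu) (r : ℕ) :
    (Finset.univ.filter (fun k : Fin N => (t.pos k).1 = r)).card = nu r := by
  rw [← Finset.card_range (nu r)]
  refine Finset.card_bij (fun k _ => (t.pos k).2) ?_ ?_ ?_
  · intro k hk
    rw [Finset.mem_filter] at hk
    show (t.pos k).2 ∈ Finset.range (nu r)
    rw [Finset.mem_range, ← hk.2]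
    exact t.mem k
  · intro k hk k' hk' hkk'
    rw [Finset.mem_filter] at hk hk'
    exact t.inj (Prod.ext (hk.2.trans hk'.2.symm) hkk')
  · intro c hc
    rw [Finset.mem_range] at hc
    obtain ⟨k, hk⟩ := t.surj (r, c) hc
    refine ⟨k, ?_, ?_⟩
    · rw [Finset.mem_filter]
      exact ⟨Finset.mem_univ k, by rw [hk]⟩
    · show (t.pos k).2 = c
      rw [hk]

lemma rows_card {N : ℕ} {nu : ℕ → ℕ} (t : YTableau N nu) (R : Finset ℕ) :
    (Finset.univ.filter (fun k : Fin N => (t.pos k).1 ∈ R)).card = ∑ r ∈ R, nu r := by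
  classical
  rw [Finset.card_eq_sum_card_fiberwise (f := fun k : Fin N => (t.pos k).1)
    (s := Finset.univ.filter (fun k : Fin N => (t.pos k).1 ∈ R)) (t := R) (fun k hk => (Finset.mem_filter.mp hk).2)]
  refine Finset.sum_congr rfl fun r hr => ?_
  rw [show (Finset.univ.filter (fun k : Fin N => (t.pos k).1 ∈ R)).filter
      (fun k => (t.pos k).1 = r) = Finset.univ.filter (fun k : Fin N => (t.pos k).1 = r) by
    ext k
    simp only [Finset.mem_filter, Finset.mem_univ, true_and]
    constructor
    · rintro ⟨_, h2⟩; exact h2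
    · intro h2; exact ⟨by rw [h2]; exact hr, h2⟩]
  exact fiber_card t r

end SchaperRegroup


/-- Proposition 1.4 (Fayers): `ν_p(λ⋆μ) ≥ ν_p(λ) + ν_p(μ)`, where `λ⋆μ` is the partition
of `n + m` whose multiset of parts is the union of the multisets of parts of `λ` and `μ`. -/
theorem schaper_superadditive (p : ℕ) (hp : p.Prime)
    (n m : ℕ) (lam mu nu : ℕ → ℕ)
    (hlam : IsPartitionOf n lam) (hmu : IsPartitionOf m mu)
    (hnu : IsPartitionOf (n + m) nu)
    (hparts : ∀ v : ℕ, 0 < v →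
      ((Finset.range (n + m)).filter fun i => nu i = v).card =
        ((Finset.range n).filter fun i => lam i = v).card +
          ((Finset.range m).filter fun i => mu i = v).card) :
    schaperNumber p n lam + schaperNumber p m mu ≤ schaperNumber p (n + m) nu := by
  classical
  have hp2 : 2 ≤ p := hp.two_le
  have hdvdlam := schaper_dvd (κ := lam) hp2 hlam
  have hdvdmu := schaper_dvd (κ := mu) hp2 hmu
  obtain ⟨t₀⟩ := exists_ytableau hnu
  have hbdd : BddAbove {k : ℕ | ∀ s t : YTableau (n+m) nu, RowEquiv s t →
      (p : ℤ) ^ k ∣ tabloidInner (polytabloid s) (polytabloid t)} := by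
    refine ⟨(colStab t₀).card, ?_⟩
    intro k hk
    have hd := hk t₀ t₀ (fun _ => rfl)
    rw [innerSum_eq, innerSum_self] at hd
    have hcpos : 0 < (colStab t₀).card :=
      Finset.card_pos.mpr ⟨1, one_mem_colStab t₀⟩
    have hle : (p:ℤ)^k ≤ ((colStab t₀).card : ℤ) :=
      Int.le_of_dvd (by exact_mod_cast hcpos) hd
    have hle' : p^k ≤ (colStab t₀).card := by exact_mod_cast hle
    exact le_of_lt (calc k < 2^k := Nat.lt_two_pow_self
      _ ≤ p^k := Nat.pow_le_pow_left hp2 k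
      _ ≤ (colStab t₀).card := hle')
  have hmem : (schaperNumber p n lam + schaperNumber p m mu) ∈
      {k : ℕ | ∀ s t : YTableau (n+m) nu, RowEquiv s t →
      (p : ℤ) ^ k ∣ tabloidInner (polytabloid s) (polytabloid t)} := by
    intro s t hst
    rw [innerSum_eq]
    -- merge data
    have hflmono : StrictMono (fun i => i + cnt mu m (lam i + 1)) := fl_strictMono hlam
    have hfmmono : StrictMono (fun j => j + cnt lam n (mu j)) := fm_strictMono hmu
    set fl : ℕ → ℕ := fun i => i + cnt mu m (lam i + 1) with hfldef
    set fm : ℕ → ℕ := fun j => j + cnt lam n (mu j) with hfmdef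
    set Rl : Finset ℕ := ((Finset.range n).filter (fun i => 1 ≤ lam i)).image fl with hRldef
    set Rm : Finset ℕ := ((Finset.range m).filter (fun j => 1 ≤ mu j)).image fm with hRmdef
    set gl : ℕ → ℕ := Function.invFun fl with hgldef
    set gm : ℕ → ℕ := Function.invFun fm with hgmdef
    have hglf : ∀ i, gl (fl i) = i := fun i =>
      Function.leftInverse_invFun hflmono.injective i
    have hgmf : ∀ j, gm (fm j) = j := fun j =>
      Function.leftInverse_invFun hfmmono.injective j
    have hnufl : ∀ i, 1 ≤ lam i → nu (fl i) = lam i := fun i hi =>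
      nu_fl hlam hmu hnu hparts hi
    have hnufm : ∀ j, 1 ≤ mu j → nu (fm j) = mu j := fun j hj =>
      nu_fm hlam hmu hnu hparts hj
    have hRlnu : ∀ r ∈ Rl, nu r = lam (gl r) := by
      intro r hr
      rw [hRldef, Finset.mem_image] at hr
      obtain ⟨i, hi, rfl⟩ := hr
      rw [Finset.mem_filter] at hi
      rw [hglf i]
      exact hnufl i hi.2
    have hRmnu : ∀ r ∈ Rm, nu r = mu (gm r) := by
      intro r hr
      rw [hRmdef, Finset.mem_image] at hr
      obtain ⟨j, hj, rfl⟩ := hr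
      rw [Finset.mem_filter] at hj
      rw [hgmf j]
      exact hnufm j hj.2
    have hRlf : ∀ r ∈ Rl, fl (gl r) = r := by
      intro r hr
      rw [hRldef, Finset.mem_image] at hr
      obtain ⟨i, hi, rfl⟩ := hr
      rw [hglf i]
    have hRmf : ∀ r ∈ Rm, fm (gm r) = r := by
      intro r hr
      rw [hRmdef, Finset.mem_image] at hr
      obtain ⟨j, hj, rfl⟩ := hr
      rw [hgmf j]
    have hRlmem : ∀ i, 0 < lam i → fl i ∈ Rl ∧ gl (fl i) = i := by
      intro i hi
      have hin : i < n := by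
        by_contra hge
        rw [part_eq_zero hlam i (le_of_not_gt hge)] at hi
        omega
      exact ⟨Finset.mem_image_of_mem _
        (Finset.mem_filter.mpr ⟨Finset.mem_range.mpr hin, hi⟩), hglf i⟩
    have hRmmem : ∀ j, 0 < mu j → fm j ∈ Rm ∧ gm (fm j) = j := by
      intro j hj
      have hjn : j < m := by
        by_contra hge
        rw [part_eq_zero hmu j (le_of_not_gt hge)] at hj
        omega
      exact ⟨Finset.mem_image_of_mem _
        (Finset.mem_filter.mpr ⟨Finset.mem_range.mpr hjn, hj⟩), hgmf j⟩
    -- entry sets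
    set E : Finset (Fin (n+m)) := Finset.univ.filter (fun k => (s.pos k).1 ∈ Rl) with hEdef
    set Em : Finset (Fin (n+m)) := Finset.univ.filter (fun k => (s.pos k).1 ∈ Rm) with hEmdef
    have hE_s : ∀ k, k ∈ E ↔ (s.pos k).1 ∈ Rl := by
      intro k
      rw [hEdef, Finset.mem_filter]
      simp
    have hEm_s : ∀ k, k ∈ Em ↔ (s.pos k).1 ∈ Rm := by
      intro k
      rw [hEmdef, Finset.mem_filter]
      simp
    have hE_t : ∀ k, k ∈ E ↔ (t.pos k).1 ∈ Rl := by
      intro k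
      rw [hE_s k, hst k]
    have hEm_t : ∀ k, k ∈ Em ↔ (t.pos k).1 ∈ Rm := by
      intro k
      rw [hEm_s k, hst k]
    have hcover := merge_cover hlam hmu hnu hparts
    have hdisj : ∀ r, r ∈ Rl → r ∈ Rm → False := by
      intro r h1 h2
      rw [hRldef, Finset.mem_image] at h1
      rw [hRmdef, Finset.mem_image] at h2
      obtain ⟨i, hi, hri⟩ := h1
      obtain ⟨j, hj, hrj⟩ := h2
      rw [Finset.mem_filter] at hi hj
      exact fl_ne_fm hlam hmu hnu hparts hi.2 hj.2 (hri.trans hrj.symm)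
    have hrowpos : ∀ k : Fin (n+m),
        (s.pos k).1 ∈ (Finset.range (n+m)).filter (fun r => 1 ≤ nu r) := by
      intro k
      have h1 := s.mem k
      rw [Finset.mem_filter, Finset.mem_range]
      constructor
      · by_contra hge
        rw [part_eq_zero hnu _ (le_of_not_gt hge)] at h1
        omega
      · omega
    have hsplit : ∀ k : Fin (n+m), k ∈ Em ↔ k ∉ E := by
      intro k
      rw [hEm_s k, hE_s k]
      have hrow := hrowpos k
      rw [← hcover, Finset.mem_union] at hrow
      constructor
      · intro h1 h2
        exact hdisj _ h2 h1
      · intro h2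
        rcases hrow with h | h
        · exact absurd h h2
        · exact h
    -- cardinalities
    have hEcard : E.card = n := by
      rw [hEdef, rows_card s Rl, hRldef,
        Finset.sum_image (fun a _ b _ hab => hflmono.injective hab)]
      rw [Finset.sum_congr rfl (fun i hi => hnufl i (Finset.mem_filter.mp hi).2)]
      rw [Finset.sum_filter_of_ne (fun i _ hne => by omega)]
      exact sum_range_part hlam
    have hEmcard : Em.card = m := by
      rw [hEmdef, rows_card s Rm, hRmdef,
        Finset.sum_image (fun a _ b _ hab => hfmmono.injective hab)]
      rw [Finset.sum_congr rfl (fun j hj => hnufm j (Finset.mem_filter.mp hj).2)]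
      rw [Finset.sum_filter_of_ne (fun j _ hne => by omega)]
      exact sum_range_part hmu
    have ee : Fin n ≃ {x : Fin (n+m) // x ∈ E} :=
      (Fintype.equivFinOfCardEq (by rw [Fintype.card_coe]; exact hEcard)).symm
    have em : Fin m ≃ {x : Fin (n+m) // x ∈ Em} :=
      (Fintype.equivFinOfCardEq (by rw [Fintype.card_coe]; exact hEmcard)).symm
    -- expand the inner sum and regroup by the image of E
    have expand : innerSum s t = ∑ S ∈ (colStab s).image (fun σ : Equiv.Perm (Fin (n+m)) => E.image ⇑σ),
        ∑ σ ∈ (colStab s).filter (fun σ : Equiv.Perm (Fin (n+m)) => E.image ⇑σ = S),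
          ∑ τ ∈ (colStab t).filter (fun τ : Equiv.Perm (Fin (n+m)) => E.image ⇑τ = S),
            psgn σ * psgn τ * (if rowfun s σ = rowfun t τ then (1:ℤ) else 0) := by
      unfold innerSum
      rw [← Finset.sum_fiberwise_of_maps_to
          (g := fun σ : Equiv.Perm (Fin (n+m)) => E.image ⇑σ)
          (t := (colStab s).image (fun σ : Equiv.Perm (Fin (n+m)) => E.image ⇑σ))
          (fun σ hσ => Finset.mem_image_of_mem _ hσ)]
      refine Finset.sum_congr rfl fun S hS => Finset.sum_congr rfl fun σ hσ => ?_
      rw [Finset.mem_filter] at hσ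
      refine (Finset.sum_filter_of_ne ?_).symm
      intro τ hτ hne
      have hcond : rowfun s σ = rowfun t τ := by
        by_contra hc
        rw [if_neg hc, mul_zero] at hne
        exact hne rfl
      rw [← hσ.2]
      ext x
      simp only [Finset.mem_image]
      have hchar : ∀ w : Equiv.Perm (Fin (n+m)), (∃ k ∈ E, w k = x) ↔ w⁻¹ x ∈ E := by
        intro w
        constructor
        · rintro ⟨k, hk, rfl⟩
          simpa using hk
        · intro hk
          exact ⟨w⁻¹ x, hk, by simp⟩
      rw [hchar τ, hchar σ, hE_t (τ⁻¹ x), hE_s (σ⁻¹ x)]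
      have := congrFun hcond x
      unfold rowfun at this
      rw [← this]
    rw [expand]
    rw [pow_add]
    refine Finset.dvd_sum ?_
    intro S hS
    by_cases h1 : ((colStab s).filter
        (fun σ : Equiv.Perm (Fin (n+m)) => E.image ⇑σ = S)).Nonempty
    swap
    · rw [Finset.not_nonempty_iff_eq_empty] at h1
      rw [h1, Finset.sum_empty]
      exact dvd_zero _
    by_cases h2 : ((colStab t).filter
        (fun τ : Equiv.Perm (Fin (n+m)) => E.image ⇑τ = S)).Nonempty
    swap
    · rw [Finset.not_nonempty_iff_eq_empty] at h2
      rw [Finset.sum_congr rfl (fun σ _ => by rw [h2, Finset.sum_empty])]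
      rw [Finset.sum_const, smul_zero]
      exact dvd_zero _
    obtain ⟨g, hg⟩ := h1
    obtain ⟨h, hh⟩ := h2
    rw [Finset.mem_filter] at hg hh
    have hu : ∀ k : Fin (n+m), k ∈ E ↔ (h⁻¹ * g) k ∈ E := by
      intro k
      constructor
      · intro hk
        have hgk : g k ∈ S := by
          rw [← hg.2]
          exact Finset.mem_image_of_mem _ hk
        rw [← hh.2, Finset.mem_image] at hgk
        obtain ⟨k', hk', hk'e⟩ := hgk
        have : (h⁻¹ * g) k = k' := by
          simp only [Equiv.Perm.mul_apply]
          rw [← hk'e]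
          simp
        rwa [this]
      · intro hk
        have : g k = h ((h⁻¹ * g) k) := by
          simp [Equiv.Perm.mul_apply]
        have hgk : g k ∈ S := by
          rw [← hh.2, this]
          exact Finset.mem_image_of_mem _ hk
        rw [← hg.2, Finset.mem_image] at hgk
        obtain ⟨k'', hk'', hk''e⟩ := hgk
        rwa [← g.injective hk''e]
    have hreg := regroup_sum s t E S g h hg.1 hg.2 hh.1 hh.2
    have hfac := factor_sum s t E Em hsplit (h⁻¹ * g) hu
    rw [hreg, hfac]
    have hXl := side_dvd s t E Rl gl fl (h⁻¹ * g) ee hE_s hE_t hRlnu hRlf hRlmem hu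
      ((p:ℤ)^(schaperNumber p n lam)) hdvdlam
    have huEm : ∀ k : Fin (n+m), k ∈ Em ↔ (h⁻¹ * g) k ∈ Em := by
      intro k
      rw [hsplit, hsplit]
      constructor
      · intro hk hc
        exact hk ((hu k).mpr hc)
      · intro hk hc
        exact hk ((hu k).mp hc)
    have hXm := side_dvd s t Em Rm gm fm (h⁻¹ * g) em hEm_s hEm_t hRmnu hRmf hRmmem huEm
      ((p:ℤ)^(schaperNumber p m mu)) hdvdmu
    exact Dvd.dvd.mul_left (mul_dvd_mul hXl hXm) _
  exact le_csSup hbdd hmem
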